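/- arXiv:2002.11599 — 5 statements merged into one kernel-verified Lean document; each statement's English description precedes it below -/
import Mathlib

section
/- If a probability density function g on R^d satisfies |P_g(B(x,r)) - c_d r^d g(x)| <= C_1 r^{d+2} for all x and r > 0 (with C_1 > 0 a constant), then g is uniformly bounded: g(x) <= (1 + d/2) / (c_d (d/(2C_1))^{d/(d+2)}) for all x. -/
/-! Since `g` is a probability density, the mass of any ball is at most `1`, so the local mass
approximation gives `c_d r^d g(x) ≤ 1 + C₁ r^{d+2}` for every radius `r > 0`. The stated bound is
this inequality at the radius minimising `(1 + C₁ r^{d+2}) / r^d`, i.e. `r^{d+2} = d / (2 C₁)`. -/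

open MeasureTheory Metric Real

theorem le_one_add_of_abs_setIntegral_sub_le {α : Type*} [MeasurableSpace α] {μ : Measure α}
    {g : α → ℝ} (hg_nonneg : 0 ≤ᵐ[μ] g) (hg_integrable : Integrable g μ) (hg_int : ∫ x, g x ∂μ = 1)
    {s : Set α} {a ε : ℝ} (h : |(∫ x in s, g x ∂μ) - a| ≤ ε) : a ≤ 1 + ε := by
  have hmass : ∫ x in s, g x ∂μ ≤ 1 :=
    hg_int ▸ setIntegral_le_integral hg_integrable hg_nonneg
  linarith [(abs_le.mp h).1]

theorem density_uniform_bound_of_local_mass_approx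
    (d : ℕ) (hd : 0 < d) (g : EuclideanSpace ℝ (Fin d) → ℝ) (C₁ : ℝ) (hC₁ : 0 < C₁)
    (hg_nonneg : ∀ x, 0 ≤ g x)
    (hg_integrable : Integrable g)
    (hg_int : ∫ x, g x = 1)
    (hP : ∀ (x : EuclideanSpace ℝ (Fin d)) (r : ℝ), 0 < r →
      |(∫ y in closedBall x r, g y) -
          (volume (ball (0 : EuclideanSpace ℝ (Fin d)) 1)).toReal * r ^ d * g x|
        ≤ C₁ * r ^ (d + 2)) :
    ∀ x, g x ≤ (1 + (d : ℝ) / 2) /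
      ((volume (ball (0 : EuclideanSpace ℝ (Fin d)) 1)).toReal *
        ((d : ℝ) / (2 * C₁)) ^ ((d : ℝ) / ((d : ℝ) + 2))) := by
  intro x
  set c := (volume (ball (0 : EuclideanSpace ℝ (Fin d)) 1)).toReal
  set A := (d : ℝ) / (2 * C₁)
  have hc : 0 < c := ENNReal.toReal_pos (measure_ball_pos _ _ one_pos).ne' measure_ball_lt_top.ne
  have hA : 0 < A := by positivity
  set r := A ^ (((d + 2 : ℕ) : ℝ)⁻¹)
  have hr_pow_add_two : r ^ (d + 2) = A := rpow_inv_natCast_pow hA.le (by omega)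
  have hr_pow : r ^ d = A ^ ((d : ℝ) / ((d : ℝ) + 2)) := by
    rw [← rpow_mul_natCast hA.le, inv_mul_eq_div]
    push_cast
    ring_nf
  have hbound := le_one_add_of_abs_setIntegral_sub_le (ae_of_all _ hg_nonneg) hg_integrable
    hg_int (hP x r (by positivity))
  rw [hr_pow_add_two, hr_pow, show C₁ * A = (d : ℝ) / 2 by simp only [A]; field_simp] at hbound
  rw [le_div_iff₀ (by positivity)]
  linarith
end

section
/- Let X be a random vector in R^d with density f, and let g be another density with g(X) > 0 a.s. Suppose P(g(X) <= t) <= μ t^γ for all t > 0, for constants μ > 0 and γ in (0,1]. Then for sufficiently small t > 0: if γ < 1, then E[(1/g(X)) 1{g(X) > t}] <= (μ/(1-γ)) t^{γ-1}; and if γ = 1, then E[(1/g(X)) 1{g(X) > t}] <= μ (1 + ln(1/(μ t))). -/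
open MeasureTheory Real Set

/-! By the layer-cake formula, with `Y = g ∘ X`,
`E[Y⁻¹; Y > t] = ∫₀^{1/t} P(t < Y < 1/s) ds ≤ ∫₀^{1/t} min 1 (μ s^{-γ}) ds`,
using `P(Y ≤ 1/s) ≤ μ s^{-γ}`. For `γ < 1` the bound `μ s^{-γ}` alone is integrable at `0`;
for `γ = 1` one splits at `s = μ`, which lies below `1/t` once `t < 1/μ`. -/

section LayerCake

variable {α : Type*} [MeasurableSpace α] {μ : Measure α} [IsFiniteMeasure μ]

theorem integral_le_of_forall_measureReal_lt_le {f : α → ℝ} {M : ℝ}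
    (hf : AEStronglyMeasurable f μ) (hf0 : ∀ a, 0 ≤ f a) (hfM : ∀ a, f a ≤ M)
    {b : ℝ → ℝ} (hb : IntegrableOn b (Ioc 0 M))
    (hfb : ∀ s ∈ Ioc 0 M, μ.real {a | s < f a} ≤ b s) :
    ∫ a, f a ∂μ ≤ ∫ s in Ioc 0 M, b s := by
  have hfi : Integrable f μ :=
    .of_bound hf M (.of_forall fun a => by rw [norm_of_nonneg (hf0 a)]; exact hfM a)
  have hvanish : ∀ s ∈ Ioi 0 \ Ioc 0 M, μ.real {a | s < f a} = 0 := by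
    rintro s ⟨hs0, hsM⟩
    have hMs : M < s := lt_of_not_ge fun h => hsM ⟨hs0, h⟩
    have hempty : {a | s < f a} = ∅ :=
      eq_empty_of_forall_notMem fun a ha => (hfM a).not_gt (hMs.trans ha)
    simp [hempty]
  rw [hfi.integral_eq_integral_meas_lt (.of_forall hf0),
    setIntegral_eq_of_subset_of_forall_sdiff_eq_zero measurableSet_Ioi Ioc_subset_Ioi_self hvanish]
  exact integral_mono_of_nonneg (.of_forall fun _ => measureReal_nonneg) hb
    (ae_restrict_of_forall_mem measurableSet_Ioc hfb)

theorem setIntegral_inv_le_of_forall_measureReal_le_le {Y : α → ℝ} (hY : Measurable Y)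
    {t : ℝ} (ht : 0 < t) {b : ℝ → ℝ} (hb : IntegrableOn b (Ioc 0 t⁻¹))
    (hYb : ∀ s ∈ Ioc 0 t⁻¹, μ.real {a | Y a ≤ s⁻¹} ≤ b s) :
    ∫ a in {a | t < Y a}, (Y a)⁻¹ ∂μ ≤ ∫ s in Ioc 0 t⁻¹, b s := by
  set S := {a | t < Y a}
  have hS : MeasurableSet S := measurableSet_lt measurable_const hY
  rw [← integral_indicator hS]
  refine integral_le_of_forall_measureReal_lt_le
    (hY.inv.indicator hS).aestronglyMeasurable (fun a => ?_) (fun a => ?_) hb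
    (fun s hs => (measureReal_mono fun a ha => ?_).trans (hYb s hs))
  · exact indicator_nonneg (fun a ha => inv_nonneg.mpr (ht.trans ha).le) a
  · exact indicator_le' (fun a ha => inv_anti₀ ht (le_of_lt ha))
      (fun _ _ => inv_nonneg.mpr ht.le) a
  · rw [mem_ofPred_eq] at ha
    have h : a ∈ S := by
      by_contra h
      rw [indicator_of_notMem h] at ha
      exact lt_asymm hs.1 ha
    rw [indicator_of_mem h] at ha
    exact (lt_inv_comm₀ hs.1 (ht.trans h)).mp ha |>.le

end LayerCake

theorem integral_Ioc_zero_const_mul_rpow_neg {γ M : ℝ} (hγ : γ < 1) (hM : 0 ≤ M) (c : ℝ) :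
    ∫ s in Ioc 0 M, c * s ^ (-γ) = c / (1 - γ) * M ^ (1 - γ) := by
  rw [← intervalIntegral.integral_of_le hM, intervalIntegral.integral_const_mul,
    integral_rpow (.inl (by linarith)), zero_rpow (by linarith), neg_add_eq_sub]
  field_simp
  ring

theorem integrableOn_Ioc_zero_const_mul_rpow_neg {γ M : ℝ} (hγ : γ < 1) (hM : 0 ≤ M) (c : ℝ) :
    IntegrableOn (fun s => c * s ^ (-γ)) (Ioc 0 M) :=
  (intervalIntegrable_iff_integrableOn_Ioc_of_le hM).mp
    ((intervalIntegral.intervalIntegrable_rpow' (by linarith)).const_mul c)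

theorem integrableOn_Ioc_zero_min_one_div {c : ℝ} (hc : 0 ≤ c) (M : ℝ) :
    IntegrableOn (fun s => min 1 (c / s)) (Ioc 0 M) := by
  refine Measure.integrableOn_of_bounded (M := 1) measure_Ioc_lt_top.ne
    (by fun_prop) (ae_restrict_of_forall_mem measurableSet_Ioc fun s hs => ?_)
  rw [norm_of_nonneg (le_min zero_le_one (div_nonneg hc hs.1.le))]
  exact min_le_left _ _

theorem integral_Ioc_zero_min_one_div {c M : ℝ} (hc : 0 < c) (hcM : c ≤ M) :
    ∫ s in Ioc 0 M, min 1 (c / s) = c * (1 + log (M / c)) := by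
  have hint := integrableOn_Ioc_zero_min_one_div hc.le M
  have hsplit : Ioc 0 M = Ioc 0 c ∪ Ioc c M := (Ioc_union_Ioc_eq_Ioc hc.le hcM).symm
  have hlow : ∫ s in Ioc 0 c, min 1 (c / s) = c := by
    rw [setIntegral_congr_fun measurableSet_Ioc fun s hs =>
      min_eq_left ((one_le_div hs.1).mpr hs.2)]
    simp [hc.le]
  have hhigh : ∫ s in Ioc c M, min 1 (c / s) = c * log (M / c) := by
    rw [setIntegral_congr_fun measurableSet_Ioc fun s hs =>
      min_eq_right ((div_le_one (hc.trans hs.1)).mpr hs.1.le),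
      ← intervalIntegral.integral_of_le hcM]
    simp only [div_eq_mul_inv c, intervalIntegral.integral_const_mul,
      integral_inv_of_pos hc (hc.trans_le hcM)]
  rw [hsplit, setIntegral_union (Ioc_disjoint_Ioc_of_le le_rfl) measurableSet_Ioc
    (hint.mono_set (hsplit ▸ subset_union_left)) (hint.mono_set (hsplit ▸ subset_union_right)),
    hlow, hhigh]
  ring

theorem tail_density_ratio_bound_general
    {Ω : Type*} [MeasurableSpace Ω] (μ : Measure Ω) [IsProbabilityMeasure μ]
    {d : ℕ} (X : Ω → EuclideanSpace ℝ (Fin d)) (hX : Measurable X)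
    (g : EuclideanSpace ℝ (Fin d) → ℝ) (hg : Measurable g)
    (μc γ : ℝ) (hμc : 0 < μc)
    (htail : ∀ t : ℝ, 0 < t → (μ {ω | g (X ω) ≤ t}).toReal ≤ μc * t ^ γ) :
    ∃ t₀ > 0, ∀ t : ℝ, 0 < t → t < t₀ →
      (γ < 1 →
        ∫ ω in {ω | t < g (X ω)}, (g (X ω))⁻¹ ∂μ ≤ μc / (1 - γ) * t ^ (γ - 1)) ∧
      (γ = 1 →
        ∫ ω in {ω | t < g (X ω)}, (g (X ω))⁻¹ ∂μ ≤ μc * (1 + Real.log (1 / (μc * t)))) := by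
  have hY : Measurable fun ω => g (X ω) := hg.comp hX
  have htail_inv : ∀ s : ℝ, 0 < s → μ.real {ω | g (X ω) ≤ s⁻¹} ≤ μc * s ^ (-γ) := fun s hs => by
    rw [rpow_neg hs.le, ← inv_rpow hs.le]
    exact htail s⁻¹ (inv_pos.mpr hs)
  refine ⟨μc⁻¹, inv_pos.mpr hμc, fun t ht htμ => ⟨fun hγ => ?_, fun hγ => ?_⟩⟩
  · have hM : 0 ≤ t⁻¹ := inv_nonneg.mpr ht.le
    calc _ ≤ ∫ s in Ioc 0 t⁻¹, μc * s ^ (-γ) :=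
          setIntegral_inv_le_of_forall_measureReal_le_le hY ht
            (integrableOn_Ioc_zero_const_mul_rpow_neg hγ hM μc) fun s hs => htail_inv s hs.1
      _ = μc / (1 - γ) * t ^ (γ - 1) := by
          rw [integral_Ioc_zero_const_mul_rpow_neg hγ hM, inv_rpow ht.le, ← rpow_neg ht.le,
            neg_sub]
  · subst hγ
    have hμt : μc ≤ t⁻¹ := (lt_inv_comm₀ ht hμc).mp htμ |>.le
    calc _ ≤ ∫ s in Ioc 0 t⁻¹, min 1 (μc / s) :=
          setIntegral_inv_le_of_forall_measureReal_le_le hY ht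
            (integrableOn_Ioc_zero_min_one_div hμc.le _) fun s hs =>
            le_min measureReal_le_one
              (by simpa [div_eq_mul_inv, rpow_neg_one] using htail_inv s hs.1)
      _ = μc * (1 + log (1 / (μc * t))) := by
          rw [integral_Ioc_zero_min_one_div hμc hμt, one_div, mul_comm μc t, mul_inv,
            div_eq_mul_inv]

theorem tail_density_ratio_bound
    {Ω : Type*} [MeasurableSpace Ω] (μ : Measure Ω) [IsProbabilityMeasure μ]
    {d : ℕ} (X : Ω → EuclideanSpace ℝ (Fin d)) (hX : Measurable X)
    (g : EuclideanSpace ℝ (Fin d) → ℝ) (hg : Measurable g)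
    (μc γ : ℝ) (hμc : 0 < μc) (hγ0 : 0 < γ) (hγ1 : γ ≤ 1)
    (hgpos : ∀ᵐ ω ∂μ, 0 < g (X ω))
    (htail : ∀ t : ℝ, 0 < t → (μ {ω | g (X ω) ≤ t}).toReal ≤ μc * t ^ γ) :
    ∃ t₀ > 0, ∀ t : ℝ, 0 < t → t < t₀ →
      (γ < 1 →
        ∫ ω in {ω | t < g (X ω)}, (g (X ω))⁻¹ ∂μ ≤ μc / (1 - γ) * t ^ (γ - 1)) ∧
      (γ = 1 →
        ∫ ω in {ω | t < g (X ω)}, (g (X ω))⁻¹ ∂μ ≤ μc * (1 + Real.log (1 / (μc * t)))) :=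
  tail_density_ratio_bound_general μ X hX g hg μc γ hμc htail
end

section
/- Consequence of the cone covering: let y, Y_1, ..., Y_k in R^d, and suppose R^d is covered by cones C_1, ..., C_γ with vertex y and aperture π/6. If x lies in some cone C_j which contains points Y_{i_1},...,Y_{i_k} all at distance < ||x - y|| from y, then each Y_{i_l} satisfies ||Y_{i_l} - x|| < ||x - y||; hence y is not among the k nearest neighbors of x within {y, Y_1, ..., Y_k} when counting only k neighbors. -/
open Real InnerProductGeometry

section AcuteAngle

variable {V : Type*} [NormedAddCommGroup V] [InnerProductSpace ℝ V] {u v : V}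

theorem norm_mul_norm_lt_two_mul_inner_of_angle_lt_pi_div_three (h : angle u v < π / 3) :
    ‖u‖ * ‖v‖ < 2 * inner ℝ u v := by
  have hu : u ≠ 0 := by rintro rfl; rw [angle_zero_left] at h; linarith [pi_pos]
  have hv : v ≠ 0 := by rintro rfl; rw [angle_zero_right] at h; linarith [pi_pos]
  have hcos : 1 / 2 < cos (angle u v) := by
    rw [← cos_pi_div_three]
    exact strictAntiOn_cos ⟨angle_nonneg u v, angle_le_pi u v⟩
      ⟨by positivity, by linarith [pi_pos]⟩ h
  have hpos : 0 < ‖u‖ * ‖v‖ := by positivity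
  rw [← cos_angle_mul_norm_mul_norm]
  nlinarith

theorem norm_sub_lt_of_angle_lt_pi_div_three (h : angle u v < π / 3) (huv : ‖u‖ ≤ ‖v‖) :
    ‖u - v‖ < ‖v‖ := by
  have hinner := norm_mul_norm_lt_two_mul_inner_of_angle_lt_pi_div_three h
  have hsq : ‖u - v‖ ^ 2 < ‖v‖ ^ 2 := by
    rw [norm_sub_sq_real]
    nlinarith [mul_le_mul_of_nonneg_left huv (norm_nonneg u)]
  exact lt_of_pow_lt_pow_left₀ 2 (norm_nonneg v) hsq

end AcuteAngle

theorem cone_covering_knn (d k : ℕ) (y x : EuclideanSpace ℝ (Fin d))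
    (Y : Fin k → EuclideanSpace ℝ (Fin d))
    (hangle : ∀ i, InnerProductGeometry.angle (Y i - y) (x - y) < π / 3)
    (hdist : ∀ i, ‖Y i - y‖ < ‖x - y‖) :
    ∀ i, dist (Y i) x < dist y x := by
  intro i
  have key := norm_sub_lt_of_angle_lt_pi_div_three (hangle i) (hdist i).le
  rwa [sub_sub_sub_cancel_right, ← dist_eq_norm, ← dist_eq_norm, dist_comm x] at key
end

section
/- Let X be a random vector in R^d with P(||X|| > r) <= K/r^s for all r > 0. Fix x in R^d and let Y_1,...,Y_M be i.i.d. copies of X; let ν be the k-th nearest neighbor distance from x to {Y_1,...,Y_M} with k <= M/2. Then for any r >= (2K)^{1/s} + ||x|| and sufficiently large M, P(ν > r) <= (2eK/(r - ||x||)^s)^{M/2}. -/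
/-!
If fewer than `k ≤ M / 2` of the points `Y i` lie within distance `r` of `x`, then at least
`m = ⌊M / 2⌋ + 1` of them lie outside the ball `B(0, r - ‖x‖) ⊆ B(x, r)`. Each point does so
independently with probability at most `p = K / (r - ‖x‖) ^ s ≤ 1`, so a union bound over the
`m`-element sets of indices bounds the probability by
`C(M, m) p ^ m ≤ 2 ^ M p ^ (M / 2) = (4 p) ^ (M / 2) ≤ (2 e p) ^ (M / 2)`.
-/

open MeasureTheory ProbabilityTheory Real Finset

theorem card_filter_lt_norm_of_card_filter_dist_le_lt {ι E : Type*} [Fintype ι]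
    [SeminormedAddCommGroup E] (y : ι → E) (x : E) {r : ℝ} {k : ℕ}
    (hk : 2 * k ≤ Fintype.card ι) (h : #{i | dist (y i) x ≤ r} < k) :
    Fintype.card ι / 2 + 1 ≤ #{i | r - ‖x‖ < ‖y i‖} := by
  have hnear : #{i | ¬ r - ‖x‖ < ‖y i‖} < k := by
    refine (card_le_card fun i hi => ?_).trans_lt h
    simp only [mem_filter, mem_univ, true_and, not_lt] at hi ⊢
    linarith [dist_le_norm_add_norm (y i) x]
  have hsplit := card_filter_add_card_filter_not (s := univ) fun i => r - ‖x‖ < ‖y i‖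
  rw [card_univ] at hsplit
  omega

theorem ProbabilityTheory.iIndepFun.measure_le_card_filter_mem_le {Ω ι β : Type*} [MeasurableSpace Ω]
    {μ : Measure Ω} [Fintype ι] [MeasurableSpace β] {Y : ι → Ω → β} (hY : iIndepFun Y μ)
    {B : Set β} [DecidablePred (· ∈ B)] (hB : MeasurableSet B) {p : ENNReal}
    (hp : ∀ i, μ (Y i ⁻¹' B) ≤ p) (m : ℕ) :
    μ {ω | m ≤ #{i | Y i ω ∈ B}} ≤ (Fintype.card ι).choose m * p ^ m := by
  have hcover : {ω | m ≤ #{i | Y i ω ∈ B}} ⊆ ⋃ S ∈ powersetCard m univ, ⋂ i ∈ S, Y i ⁻¹' B := by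
    intro ω hω
    obtain ⟨S, hS, hSm⟩ := exists_subset_card_eq hω
    simp only [Set.mem_iUnion, Set.mem_iInter, mem_powersetCard]
    exact ⟨S, ⟨subset_univ S, hSm⟩, fun i hi => (mem_filter.1 (hS hi)).2⟩
  have hinter : ∀ S ∈ powersetCard m (univ : Finset ι), μ (⋂ i ∈ S, Y i ⁻¹' B) ≤ p ^ m := by
    intro S hS
    rw [hY.meas_biInter fun i _ => ⟨B, hB, rfl⟩, ← (mem_powersetCard.1 hS).2]
    exact prod_le_pow_card _ _ _ fun i _ => hp i
  calc μ {ω | m ≤ #{i | Y i ω ∈ B}}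
      ≤ ∑ S ∈ powersetCard m univ, μ (⋂ i ∈ S, Y i ⁻¹' B) :=
        (measure_mono hcover).trans (measure_biUnion_finset_le _ _)
    _ ≤ ∑ _S ∈ powersetCard m (univ : Finset ι), p ^ m := sum_le_sum hinter
    _ = (Fintype.card ι).choose m * p ^ m := by
        rw [sum_const, card_powersetCard, card_univ, nsmul_eq_mul]

theorem choose_mul_pow_le_four_mul_rpow {n m : ℕ} {p : ℝ} (hp0 : 0 ≤ p) (hp1 : p ≤ 1)
    (hnm : n ≤ 2 * m) : (n.choose m : ℝ) * p ^ m ≤ (4 * p) ^ ((n : ℝ) / 2) := by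
  have hfour : (4 : ℝ) ^ ((n : ℝ) / 2) = 2 ^ n := by
    rw [show (4 : ℝ) = 2 ^ (2 : ℝ) by norm_num, ← rpow_mul (by norm_num), ← rpow_natCast]
    ring_nf
  have hpow : p ^ m ≤ p ^ ((n : ℝ) / 2) := by
    rw [← rpow_natCast]
    exact rpow_le_rpow_of_exponent_ge' hp0 hp1 (by positivity) (by
      rw [div_le_iff₀ two_pos]; exact_mod_cast (by omega : n ≤ m * 2))
  rw [mul_rpow (by norm_num) hp0, hfour]
  exact mul_le_mul (by exact_mod_cast n.choose_le_two_pow m) hpow (by positivity)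
    (by positivity)

theorem knn_distance_tail_bound
    {Ω : Type*} [MeasurableSpace Ω]
    (d : ℕ) (K s : ℝ) (hK : 0 < K) (hs : 0 < s)
    (x : EuclideanSpace ℝ (Fin d)) :
    ∃ M₀ : ℕ, ∀ M : ℕ, M₀ ≤ M →
      ∀ μ : Measure Ω, IsProbabilityMeasure μ →
      ∀ Y : Fin M → Ω → EuclideanSpace ℝ (Fin d),
        (∀ i, Measurable (Y i)) →
        iIndepFun Y μ →
        (∀ i j, μ.map (Y i) = μ.map (Y j)) →
        (∀ i, ∀ r : ℝ, 0 < r → (μ {ω | r < ‖Y i ω‖}).toReal ≤ K / r ^ s) →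
        ∀ k : ℕ, 1 ≤ k → (k : ℝ) ≤ (M : ℝ) / 2 →
        ∀ r : ℝ, (2 * K) ^ (1 / s) + ‖x‖ ≤ r →
          (μ {ω | (Finset.univ.filter fun i => dist (Y i ω) x ≤ r).card < k}).toReal
            ≤ (2 * Real.exp 1 * K / (r - ‖x‖) ^ s) ^ ((M : ℝ) / 2) := by
  refine ⟨0, fun M _ μ _ Y _ hYind _ hYtail k _ hkM r hr => ?_⟩
  set t := r - ‖x‖
  have hroot : (2 * K) ^ (1 / s) ≤ t := by linarith
  have ht0 : 0 < t := (rpow_pos_of_pos (by positivity) _).trans_le hroot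
  have hts : 2 * K ≤ t ^ s := by
    rwa [one_div, rpow_inv_le_iff_of_pos (by positivity) ht0.le hs] at hroot
  set p := K / t ^ s
  have hp0 : 0 ≤ p := by positivity
  have hp1 : p ≤ 1 := (div_le_one (by positivity)).2 (by linarith)
  set m := M / 2 + 1
  have hkM' : 2 * k ≤ Fintype.card (Fin M) := by
    rw [Fintype.card_fin]; exact_mod_cast (by linarith : (2 * k : ℝ) ≤ M)
  have hfar : {ω | #{i | dist (Y i ω) x ≤ r} < k} ⊆ {ω | m ≤ #{i | Y i ω ∈ {y | t < ‖y‖}}} :=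
    fun ω hω => by
      have hmany := card_filter_lt_norm_of_card_filter_dist_le_lt (Y · ω) x hkM' hω
      rwa [Fintype.card_fin] at hmany
  have hcount := hYind.measure_le_card_filter_mem_le
    (measurableSet_lt measurable_const measurable_norm)
    (fun i => (ENNReal.le_ofReal_iff_toReal_le (measure_ne_top _ _) hp0).2 (hYtail i t ht0)) m
  calc (μ {ω | #{i | dist (Y i ω) x ≤ r} < k}).toReal
      ≤ (M.choose m : ℝ) * p ^ m := by
        simpa [ENNReal.toReal_ofReal hp0] using
          ENNReal.toReal_mono (by finiteness) ((measure_mono hfar).trans hcount)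
    _ ≤ (4 * p) ^ ((M : ℝ) / 2) := choose_mul_pow_le_four_mul_rpow hp0 hp1 (by omega)
    _ ≤ (2 * exp 1 * K / t ^ s) ^ ((M : ℝ) / 2) := by
        have he : (4 : ℝ) ≤ 2 * exp 1 := by linarith [exp_one_gt_d9]
        rw [mul_div_assoc]
        gcongr
end

section
/- Let A > 0 and L an integer with L > 2eA, and let Z, Z' be random variables supported on [0, A] whose first L moments coincide: E[Z^j] = E[Z'^j] for j = 1,...,L. Then the total variation distance between the Poisson mixtures E[Poi(Z)] and E[Poi(Z')] is at most (2eA/L)^L. -/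
open MeasureTheory Real

lemma auxIterDeriv (n : ℕ) {s : Set ℝ} (hs : UniqueDiffOn ℝ s) {x : ℝ} (hx : x ∈ s) :
    iteratedDerivWithin n (fun t => Real.exp (-t)) s x = (-1)^n * Real.exp (-x) := by
  induction n generalizing x with
  | zero => simp
  | succ n ih =>
    rw [iteratedDerivWithin_succ]
    have h1 : derivWithin (iteratedDerivWithin n (fun t => Real.exp (-t)) s) s x
        = derivWithin (fun y => (-1:ℝ)^n * Real.exp (-y)) s x :=
      derivWithin_congr (fun y hy => ih hy) (ih hx)
    rw [h1]
    have hd : HasDerivAt (fun y => (-1:ℝ)^n * Real.exp (-y)) ((-1)^(n+1) * Real.exp (-x)) x := by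
      have h2 : HasDerivAt (fun y : ℝ => Real.exp (-y)) (-Real.exp (-x)) x := by
        simpa [Function.comp_def] using (Real.hasDerivAt_exp (-x)).comp x (hasDerivAt_neg x)
      have h3 := h2.const_mul ((-1:ℝ)^n)
      rw [show ((-1:ℝ)^(n+1) * Real.exp (-x)) = (-1)^n * -Real.exp (-x) by ring]
      exact h3
    rw [hd.hasDerivWithinAt.derivWithin (hs x hx)]

lemma expTaylorRem (n : ℕ) {z : ℝ} (hz : 0 ≤ z) :
    |Real.exp (-z) - ∑ i ∈ Finset.range (n+1), (-z)^i / (i.factorial : ℝ)|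
      ≤ z^(n+1) / ((n+1).factorial : ℝ) := by
  rcases eq_or_lt_of_le hz with h0 | h0
  · subst h0
    simp [Finset.sum_range_succ', zero_pow]
  · have hud : UniqueDiffOn ℝ (Set.Icc (0:ℝ) z) := uniqueDiffOn_Icc h0
    have hcd : ContDiff ℝ (⊤ : ℕ∞) (fun t : ℝ => Real.exp (-t)) :=
      Real.contDiff_exp.comp contDiff_neg
    have hf : ContDiffOn ℝ n (fun t : ℝ => Real.exp (-t)) (Set.Icc 0 z) :=
      (hcd.of_le (mod_cast le_top)).contDiffOn
    have hf' : DifferentiableOn ℝ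
        (iteratedDerivWithin n (fun t : ℝ => Real.exp (-t)) (Set.Icc 0 z)) (Set.Ioo 0 z) := by
      have hdiff : DifferentiableOn ℝ (fun y : ℝ => (-1:ℝ)^n * Real.exp (-y)) (Set.Ioo 0 z) :=
        (((Real.differentiable_exp.comp differentiable_neg)).const_mul _).differentiableOn
      exact hdiff.congr (fun y hy => auxIterDeriv n hud (Set.Ioo_subset_Icc_self hy))
    obtain ⟨x', hx', hEq⟩ := taylor_mean_remainder_lagrange h0.ne
      (by rwa [Set.uIcc_of_le hz]) (by rwa [Set.uIcc_of_le hz, Set.uIoo_of_le hz])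
    rw [Set.uIcc_of_le hz] at hEq
    rw [Set.uIoo_of_le hz] at hx'
    have htay : taylorWithinEval (fun t : ℝ => Real.exp (-t)) n (Set.Icc 0 z) 0 z
        = ∑ i ∈ Finset.range (n+1), (-z)^i / (i.factorial : ℝ) := by
      rw [taylor_within_apply]
      refine Finset.sum_congr rfl fun k hk => ?_
      rw [auxIterDeriv k hud (Set.left_mem_Icc.2 hz)]
      simp only [smul_eq_mul, sub_zero, neg_zero, Real.exp_zero, mul_one]
      rw [neg_pow]
      ring
    rw [htay] at hEq
    rw [hEq, auxIterDeriv (n+1) hud (Set.Ioo_subset_Icc_self hx')]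
    have habs : |(-1:ℝ)^(n+1) * Real.exp (-x') * (z-0)^(n+1) / ((n+1).factorial : ℝ)|
        = Real.exp (-x') * z^(n+1) / ((n+1).factorial : ℝ) := by
      rw [abs_div, abs_mul, abs_mul, abs_pow, abs_pow, abs_neg, abs_one, one_pow, one_mul,
        sub_zero, abs_of_nonneg hz, abs_of_pos (Real.exp_pos _), Nat.abs_cast]
    rw [habs]
    have h1 : Real.exp (-x') ≤ 1 := Real.exp_le_one_iff.mpr (neg_nonpos.mpr hx'.1.le)
    have h2 : (0:ℝ) < ((n+1).factorial : ℝ) := by positivity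
    calc Real.exp (-x') * z^(n+1) / ((n+1).factorial : ℝ)
        ≤ 1 * z^(n+1) / ((n+1).factorial : ℝ) := by
          gcongr
      _ = z^(n+1) / ((n+1).factorial : ℝ) := by ring

lemma powFactBound {x : ℝ} (hx : 0 ≤ x) (m : ℕ) (hm : 1 ≤ m) :
    x^m / (m.factorial : ℝ) ≤ (Real.exp 1 * x / m)^m := by
  have hm0 : (0:ℝ) < m := by exact_mod_cast hm
  have hfac : (0:ℝ) < (m.factorial : ℝ) := by positivity
  have h1 : ((m:ℝ))^m / (m.factorial : ℝ) ≤ (Real.exp 1)^m := by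
    have h := Real.pow_div_factorial_le_exp (x := (m:ℝ)) (by positivity) m
    rw [show Real.exp (m:ℝ) = Real.exp ((m:ℝ)*1) by norm_num, Real.exp_nat_mul] at h
    simpa using h
  have h2 : ((m:ℝ))^m ≤ (Real.exp 1)^m * (m.factorial : ℝ) := by
    rw [div_le_iff₀ hfac] at h1
    linarith
  have h3 : (Real.exp 1 * x / m)^m = (Real.exp 1)^m * x^m / ((m:ℝ))^m := by
    rw [div_pow, mul_pow]
  rw [h3, div_le_div_iff₀ hfac (by positivity)]
  have h4 := mul_le_mul_of_nonneg_left h2 (pow_nonneg hx m)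
  nlinarith [pow_nonneg hx m]

lemma eLeRatio (L : ℕ) (hL : 1 ≤ L) : Real.exp 1 ≤ (((L:ℝ)+1)/L)^(L+1) := by
  have hL0 : (0:ℝ) < L := by exact_mod_cast hL
  have hL1 : (0:ℝ) < (L:ℝ)+1 := by positivity
  have h1 : Real.exp (1/((L:ℝ)+1)) ≤ ((L:ℝ)+1)/L := by
    have h2 := Real.add_one_le_exp (-(1/((L:ℝ)+1)))
    have h3 : (L:ℝ)/((L:ℝ)+1) ≤ Real.exp (-(1/((L:ℝ)+1))) := by
      have : (L:ℝ)/((L:ℝ)+1) = -(1/((L:ℝ)+1)) + 1 := by field_simp; ring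
      linarith [this ▸ h2]
    have h4 : Real.exp (1/((L:ℝ)+1)) = (Real.exp (-(1/((L:ℝ)+1))))⁻¹ := by
      rw [Real.exp_neg, inv_inv]
    rw [h4]
    rw [inv_le_comm₀ (Real.exp_pos _) (by positivity)]
    rw [inv_div]
    exact h3
  calc Real.exp 1 = (Real.exp (1/((L:ℝ)+1)))^(L+1) := by
        rw [← Real.exp_nat_mul]
        congr 1
        push_cast
        field_simp
    _ ≤ (((L:ℝ)+1)/L)^(L+1) := by
        apply pow_le_pow_left₀ (Real.exp_pos _).le h1

set_option maxHeartbeats 2000000 in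
theorem mixed_poisson_tv_moment_matching
    {Ω : Type*} [MeasurableSpace Ω] (μ : Measure Ω) [IsProbabilityMeasure μ]
    (A : ℝ) (hA : 0 < A) (L : ℕ) (hL : 2 * Real.exp 1 * A < L)
    (Z Z' : Ω → ℝ) (hZ : Measurable Z) (hZ' : Measurable Z')
    (hZbd : ∀ᵐ ω ∂μ, Z ω ∈ Set.Icc 0 A) (hZ'bd : ∀ᵐ ω ∂μ, Z' ω ∈ Set.Icc 0 A)
    (hmom : ∀ j : ℕ, 1 ≤ j → j ≤ L → ∫ ω, Z ω ^ j ∂μ = ∫ ω, Z' ω ^ j ∂μ) :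
    (1 / 2) * ∑' j : ℕ,
        |(∫ ω, Real.exp (-Z ω) * Z ω ^ j / (j.factorial : ℝ) ∂μ) -
          (∫ ω, Real.exp (-Z' ω) * Z' ω ^ j / (j.factorial : ℝ) ∂μ)|
      ≤ (2 * Real.exp 1 * A / L) ^ L := by
  classical
  have hE1 : (1:ℝ) ≤ Real.exp 1 := Real.one_le_exp zero_le_one
  have hE2 : (2:ℝ) ≤ Real.exp 1 := by nlinarith [Real.add_one_le_exp 1]
  have hL0 : (0:ℝ) < L := lt_trans (by positivity) hL
  have hL1 : 1 ≤ L := by exact_mod_cast hL0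
  set c : ℝ := 2 * Real.exp 1 * A / L with hc
  have hcpos : 0 < c := by positivity
  have hclt : c < 1 := (div_lt_one hL0).mpr hL
  -- the summand
  set D : ℕ → ℝ := fun j =>
    |(∫ ω, Real.exp (-Z ω) * Z ω ^ j / (j.factorial : ℝ) ∂μ) -
      (∫ ω, Real.exp (-Z' ω) * Z' ω ^ j / (j.factorial : ℝ) ∂μ)| with hD
  -- generic bounds for any bounded variable
  have habs : ∀ (W : Ω → ℝ), Measurable W → (∀ᵐ ω ∂μ, W ω ∈ Set.Icc 0 A) → ∀ j : ℕ,
      |∫ ω, Real.exp (-W ω) * W ω ^ j / (j.factorial : ℝ) ∂μ| ≤ A^j / (j.factorial : ℝ) := by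
    intro W hW hWbd j
    have hb : ∀ᵐ ω ∂μ, ‖Real.exp (-W ω) * W ω ^ j / (j.factorial : ℝ)‖
        ≤ A^j / (j.factorial : ℝ) := by
      filter_upwards [hWbd] with ω hω
      rw [Real.norm_eq_abs, abs_div, abs_mul, Nat.abs_cast,
        abs_of_pos (Real.exp_pos _), abs_of_nonneg (pow_nonneg hω.1 j)]
      have h5 : Real.exp (-W ω) * W ω ^ j ≤ A ^ j := by
        calc Real.exp (-W ω) * W ω ^ j ≤ 1 * A ^ j :=
              mul_le_mul (Real.exp_le_one_iff.mpr (neg_nonpos.mpr hω.1))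
                (pow_le_pow_left₀ hω.1 hω.2 j) (pow_nonneg hω.1 j) zero_le_one
          _ = A ^ j := one_mul _
      gcongr
    calc |∫ ω, Real.exp (-W ω) * W ω ^ j / (j.factorial : ℝ) ∂μ|
        = ‖∫ ω, Real.exp (-W ω) * W ω ^ j / (j.factorial : ℝ) ∂μ‖ := (Real.norm_eq_abs _).symm
      _ ≤ (A^j / (j.factorial : ℝ)) * (μ Set.univ).toReal :=
          norm_integral_le_of_norm_le_const hb
      _ = A^j / (j.factorial : ℝ) := by simp
  have hDall : ∀ j, D j ≤ 2 * (A^j / (j.factorial : ℝ)) := by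
    intro j
    have h1 := habs Z hZ hZbd j
    have h2 := habs Z' hZ' hZ'bd j
    calc D j ≤ |∫ ω, Real.exp (-Z ω) * Z ω ^ j / (j.factorial : ℝ) ∂μ| +
          |∫ ω, Real.exp (-Z' ω) * Z' ω ^ j / (j.factorial : ℝ) ∂μ| := abs_sub _ _
      _ ≤ 2 * (A^j / (j.factorial : ℝ)) := by linarith
  have hDnn : ∀ j, 0 ≤ D j := fun j => abs_nonneg _
  have hDsum : Summable D :=
    Summable.of_nonneg_of_le hDnn hDall ((Real.summable_pow_div_factorial A).mul_left 2)
  -- decomposition bound for j ≤ L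
  have decomp : ∀ (W : Ω → ℝ), Measurable W → (∀ᵐ ω ∂μ, W ω ∈ Set.Icc 0 A) →
      ∀ j, j ≤ L →
      |(∫ ω, Real.exp (-W ω) * W ω ^ j / (j.factorial : ℝ) ∂μ)
        - ∑ i ∈ Finset.range (L-j+1), ((-1:ℝ)^i / ((i.factorial:ℝ) * (j.factorial:ℝ)))
            * ∫ ω, W ω^(i+j) ∂μ|
      ≤ A^(L+1) / ((j.factorial:ℝ) * (((L+1-j).factorial:ℝ))) := by
    intro W hW hWbd j hj
    have hNj : (L - j) + j = L := Nat.sub_add_cancel hj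
    have hint_pow : ∀ m : ℕ, Integrable (fun ω => W ω ^ m) μ := by
      intro m
      refine Integrable.mono' (integrable_const (A^m))
        ((hW.pow_const m).aestronglyMeasurable) ?_
      filter_upwards [hWbd] with ω hω
      rw [Real.norm_eq_abs, abs_of_nonneg (pow_nonneg hω.1 m)]
      exact pow_le_pow_left₀ hω.1 hω.2 m
    have hint_g : Integrable (fun ω => Real.exp (-W ω) * W ω ^ j / (j.factorial:ℝ)) μ := by
      refine Integrable.mono' (integrable_const (A^j))
        (((hW.neg.exp.mul (hW.pow_const j)).div_const _).aestronglyMeasurable) ?_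
      filter_upwards [hWbd] with ω hω
      rw [Real.norm_eq_abs, abs_div, abs_mul, Nat.abs_cast,
        abs_of_pos (Real.exp_pos _), abs_of_nonneg (pow_nonneg hω.1 j)]
      have h5 : Real.exp (-W ω) * W ω ^ j ≤ A ^ j := by
        calc Real.exp (-W ω) * W ω ^ j ≤ 1 * A ^ j :=
              mul_le_mul (Real.exp_le_one_iff.mpr (neg_nonpos.mpr hω.1))
                (pow_le_pow_left₀ hω.1 hω.2 j) (pow_nonneg hω.1 j) zero_le_one
          _ = A ^ j := one_mul _
      calc Real.exp (-W ω) * W ω ^ j / (j.factorial:ℝ) ≤ Real.exp (-W ω) * W ω ^ j :=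
            div_le_self (mul_nonneg (Real.exp_pos _).le (pow_nonneg hω.1 j)) (by exact_mod_cast (Nat.factorial_pos j))
        _ ≤ A ^ j := h5
    have hsum_eq : ∑ i ∈ Finset.range (L-j+1), ((-1:ℝ)^i / ((i.factorial:ℝ) * (j.factorial:ℝ)))
          * ∫ ω, W ω^(i+j) ∂μ
        = ∫ ω, (∑ i ∈ Finset.range (L-j+1),
            ((-1:ℝ)^i / ((i.factorial:ℝ) * (j.factorial:ℝ))) * W ω^(i+j)) ∂μ := by
      rw [integral_finset_sum _ (fun i _ => (hint_pow (i+j)).const_mul _)]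
      exact Finset.sum_congr rfl fun i _ => (integral_const_mul _ _).symm
    have hint_p : Integrable (fun ω => ∑ i ∈ Finset.range (L-j+1),
        ((-1:ℝ)^i / ((i.factorial:ℝ) * (j.factorial:ℝ))) * W ω^(i+j)) μ :=
      integrable_finset_sum _ (fun i _ => (hint_pow (i+j)).const_mul _)
    rw [hsum_eq, ← integral_sub hint_g hint_p]
    have hb : ∀ᵐ ω ∂μ, ‖Real.exp (-W ω) * W ω ^ j / (j.factorial:ℝ)
        - ∑ i ∈ Finset.range (L-j+1),
            ((-1:ℝ)^i / ((i.factorial:ℝ) * (j.factorial:ℝ))) * W ω^(i+j)‖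
        ≤ A^(L+1) / ((j.factorial:ℝ) * (((L+1-j).factorial:ℝ))) := by
      filter_upwards [hWbd] with ω hω
      set z := W ω with hz
      have hz0 : 0 ≤ z := hω.1
      have hzA : z ≤ A := hω.2
      have hps : ∑ i ∈ Finset.range (L-j+1),
            ((-1:ℝ)^i / ((i.factorial:ℝ) * (j.factorial:ℝ))) * z^(i+j)
          = (∑ i ∈ Finset.range (L-j+1), (-z)^i/(i.factorial:ℝ)) * z^j / (j.factorial:ℝ) := by
        rw [Finset.sum_mul, Finset.sum_div]
        refine Finset.sum_congr rfl fun i _ => ?_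
        rw [neg_pow, pow_add]
        ring
      have hkey : Real.exp (-z) * z ^ j / (j.factorial:ℝ)
          - (∑ i ∈ Finset.range (L-j+1), (-z)^i/(i.factorial:ℝ)) * z^j / (j.factorial:ℝ)
          = (Real.exp (-z) - ∑ i ∈ Finset.range (L-j+1), (-z)^i/(i.factorial:ℝ))
              * z^j / (j.factorial:ℝ) := by ring
      rw [hps, Real.norm_eq_abs, hkey, abs_div, abs_mul, Nat.abs_cast,
        abs_of_nonneg (pow_nonneg hz0 j)]
      have hrem := expTaylorRem (L-j) hz0
      calc |Real.exp (-z) - ∑ i ∈ Finset.range (L-j+1), (-z)^i/(i.factorial:ℝ)|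
            * z^j / (j.factorial:ℝ)
          ≤ (z^(L-j+1) / (((L-j+1).factorial:ℝ))) * z^j / (j.factorial:ℝ) := by
            gcongr
        _ ≤ (A^(L-j+1) / (((L-j+1).factorial:ℝ))) * A^j / (j.factorial:ℝ) := by
            gcongr
        _ = A^(L+1) / ((j.factorial:ℝ) * (((L+1-j).factorial:ℝ))) := by
            rw [show L+1-j = L-j+1 by omega, show L+1 = (L-j+1)+j by omega, pow_add]
            ring
    calc |∫ ω, (Real.exp (-W ω) * W ω ^ j / (j.factorial:ℝ)
            - ∑ i ∈ Finset.range (L-j+1),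
              ((-1:ℝ)^i / ((i.factorial:ℝ) * (j.factorial:ℝ))) * W ω^(i+j)) ∂μ|
        = ‖∫ ω, (Real.exp (-W ω) * W ω ^ j / (j.factorial:ℝ)
            - ∑ i ∈ Finset.range (L-j+1),
              ((-1:ℝ)^i / ((i.factorial:ℝ) * (j.factorial:ℝ))) * W ω^(i+j)) ∂μ‖ :=
          (Real.norm_eq_abs _).symm
      _ ≤ (A^(L+1) / ((j.factorial:ℝ) * (((L+1-j).factorial:ℝ)))) * (μ Set.univ).toReal :=
          norm_integral_le_of_norm_le_const hb
      _ = A^(L+1) / ((j.factorial:ℝ) * (((L+1-j).factorial:ℝ))) := by simp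
  -- head bound
  have hDhead : ∀ j, j ≤ L → D j ≤ 2 * A^(L+1) / ((j.factorial:ℝ) * (((L+1-j).factorial:ℝ))) := by
    intro j hj
    have e1 := decomp Z hZ hZbd j hj
    have e2 := decomp Z' hZ' hZ'bd j hj
    have hS : (∑ i ∈ Finset.range (L-j+1), ((-1:ℝ)^i / ((i.factorial:ℝ) * (j.factorial:ℝ)))
          * ∫ ω, Z ω^(i+j) ∂μ)
        = ∑ i ∈ Finset.range (L-j+1), ((-1:ℝ)^i / ((i.factorial:ℝ) * (j.factorial:ℝ)))
          * ∫ ω, Z' ω^(i+j) ∂μ := by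
      refine Finset.sum_congr rfl fun i hi => ?_
      rcases Nat.eq_zero_or_pos (i+j) with h0 | h0
      · rw [h0]; simp
      · have hiL : i + j ≤ L := by
          have := Finset.mem_range.mp hi
          omega
        rw [hmom (i+j) h0 hiL]
    rw [hD]
    set Ig := ∫ ω, Real.exp (-Z ω) * Z ω ^ j / (j.factorial : ℝ) ∂μ
    set Ig' := ∫ ω, Real.exp (-Z' ω) * Z' ω ^ j / (j.factorial : ℝ) ∂μ
    set S := ∑ i ∈ Finset.range (L-j+1), ((-1:ℝ)^i / ((i.factorial:ℝ) * (j.factorial:ℝ)))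
        * ∫ ω, Z ω^(i+j) ∂μ with hSdef
    set S' := ∑ i ∈ Finset.range (L-j+1), ((-1:ℝ)^i / ((i.factorial:ℝ) * (j.factorial:ℝ)))
        * ∫ ω, Z' ω^(i+j) ∂μ with hS'def
    calc |Ig - Ig'| = |(Ig - S) - (Ig' - S')| := by rw [hS]; ring_nf
      _ ≤ |Ig - S| + |Ig' - S'| := abs_sub _ _
      _ ≤ 2 * A^(L+1) / ((j.factorial:ℝ) * (((L+1-j).factorial:ℝ))) := by
          rw [mul_div_assoc]
          linarith
  -- tail bounds
  set q : ℝ := c / 2 with hq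
  have hq0 : 0 ≤ q := by positivity
  have hq2 : q ≤ 1/2 := by rw [hq]; linarith
  have hq1 : q < 1 := lt_of_le_of_lt hq2 (by norm_num)
  have hqc : Real.exp 1 * A / L = q := by rw [hq, hc]; ring
  have htailterm : ∀ i : ℕ, D (i + (L+1)) ≤ 2 * q ^ (i + (L+1)) := by
    intro i
    set m : ℕ := i + (L+1) with hm
    have hm1 : 1 ≤ m := by omega
    have h1 : A^m / ((m.factorial:ℝ)) ≤ (Real.exp 1 * A / (m:ℝ))^m :=
      powFactBound hA.le m hm1
    have hmL : (L:ℝ) ≤ (m:ℝ) := by exact_mod_cast (by omega : L ≤ m)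
    have h2 : Real.exp 1 * A / (m:ℝ) ≤ q := by
      rw [← hqc]
      gcongr
    have h3 : (Real.exp 1 * A / (m:ℝ))^m ≤ q^m := by
      apply pow_le_pow_left₀ (by positivity) h2
    calc D m ≤ 2 * (A^m / ((m.factorial:ℝ))) := hDall _
      _ ≤ 2 * (Real.exp 1 * A / (m:ℝ))^m := by linarith
      _ ≤ 2 * q ^ m := by linarith
  have hgeq : (fun i : ℕ => 2 * q ^ (i + (L+1))) = fun i => (2 * q^(L+1)) * q^i := by
    funext i; rw [pow_add]; ring
  have hgs : Summable (fun i : ℕ => 2 * q ^ (i + (L+1))) := by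
    rw [hgeq]
    exact (summable_geometric_of_lt_one hq0 hq1).mul_left _
  have hT : ∑' i : ℕ, D (i + (L+1)) ≤ 4 * q^(L+1) := by
    have h1 : ∑' i : ℕ, D (i + (L+1)) ≤ ∑' i : ℕ, 2 * q ^ (i + (L+1)) :=
      Summable.tsum_le_tsum htailterm ((summable_nat_add_iff (L+1)).mpr hDsum) hgs
    have h2 : ∑' i : ℕ, 2 * q ^ (i + (L+1)) = 2 * q^(L+1) * (1-q)⁻¹ := by
      rw [hgeq, tsum_mul_left, tsum_geometric_of_lt_one hq0 hq1]
    have h3 : (1-q)⁻¹ ≤ 2 := by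
      rw [show (2:ℝ) = ((1:ℝ)/2)⁻¹ by norm_num]
      apply inv_anti₀ (by norm_num)
      linarith
    have h4 : 2 * q^(L+1) * (1-q)⁻¹ ≤ 2 * q^(L+1) * 2 := by
      gcongr
    rw [h2] at h1
    linarith
  -- head bound
  have hchsum : (∑ j ∈ Finset.range (L+1), (((L+1).choose j : ℕ):ℝ)) ≤ 2^(L+1) := by
    have h1 : (∑ j ∈ Finset.range (L+1), (L+1).choose j)
        ≤ ∑ j ∈ Finset.range (L+2), (L+1).choose j :=
      Finset.sum_le_sum_of_subset (Finset.range_subset_range.mpr (by omega))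
    have h2 : ∑ j ∈ Finset.range (L+2), (L+1).choose j = 2^(L+1) := Nat.sum_range_choose (L+1)
    rw [h2] at h1
    calc (∑ j ∈ Finset.range (L+1), (((L+1).choose j : ℕ):ℝ))
        = ((∑ j ∈ Finset.range (L+1), (L+1).choose j : ℕ):ℝ) := by push_cast; rfl
      _ ≤ ((2^(L+1) : ℕ):ℝ) := by exact_mod_cast h1
      _ = 2^(L+1) := by push_cast; rfl
  have hfact : ∀ j, j ≤ L → (2:ℝ) * A^(L+1) / ((j.factorial:ℝ) * (((L+1-j).factorial:ℝ)))
      = 2 * A^(L+1) * (((L+1).choose j : ℕ):ℝ) / (((L+1).factorial:ℝ)) := by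
    intro j hj
    have h := Nat.choose_mul_factorial_mul_factorial (show j ≤ L+1 by omega)
    have hcast : (((L+1).choose j : ℕ):ℝ) * (j.factorial:ℝ) * (((L+1-j).factorial:ℝ))
        = (((L+1).factorial:ℝ)) := by exact_mod_cast h
    have ha : (j.factorial:ℝ) ≠ 0 := by positivity
    have hb : (((L+1-j).factorial:ℝ)) ≠ 0 := by positivity
    have hch : (((L+1).choose j : ℕ):ℝ) ≠ 0 := by
      exact_mod_cast (Nat.choose_pos (show j ≤ L+1 by omega)).ne'
    rw [← hcast]
    field_simp
  have hH : ∑ j ∈ Finset.range (L+1), D j ≤ 2 * (2*A)^(L+1) / (((L+1).factorial:ℝ)) := by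
    calc ∑ j ∈ Finset.range (L+1), D j
        ≤ ∑ j ∈ Finset.range (L+1), 2 * A^(L+1) * (((L+1).choose j : ℕ):ℝ)
            / (((L+1).factorial:ℝ)) := by
          refine Finset.sum_le_sum fun j hj => ?_
          have hjL : j ≤ L := by
            have := Finset.mem_range.mp hj; omega
          exact (hDhead j hjL).trans_eq (hfact j hjL)
      _ = (2 * A^(L+1) * ∑ j ∈ Finset.range (L+1), (((L+1).choose j : ℕ):ℝ))
            / (((L+1).factorial:ℝ)) := by
          rw [← Finset.sum_div, ← Finset.mul_sum]
      _ ≤ (2 * A^(L+1) * 2^(L+1)) / (((L+1).factorial:ℝ)) := by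
          gcongr
      _ = 2 * (2*A)^(L+1) / (((L+1).factorial:ℝ)) := by
          rw [mul_pow]; ring
  -- final numeric bounds
  have hHB : (2*A)^(L+1) / (((L+1).factorial:ℝ)) ≤ c^L * (Real.exp 1)⁻¹ := by
    have hcast1 : (((L+1):ℕ):ℝ) = (L:ℝ)+1 := by push_cast; ring
    have step1 : (2*A)^(L+1) / (((L+1).factorial:ℝ)) ≤ (Real.exp 1 * (2*A) / ((L:ℝ)+1))^(L+1) := by
      have h := powFactBound (x := 2*A) (by positivity) (L+1) (by omega)
      rwa [hcast1] at h
    have step2 : (Real.exp 1 * (2*A) / ((L:ℝ)+1))^(L+1) = c^(L+1) * ((L:ℝ)/((L:ℝ)+1))^(L+1) := by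
      rw [← mul_pow]
      congr 1
      rw [hc]
      field_simp
    have step3 : ((L:ℝ)/((L:ℝ)+1))^(L+1) ≤ (Real.exp 1)⁻¹ := by
      have h1 : ((L:ℝ)/((L:ℝ)+1))^(L+1) = ((((L:ℝ)+1)/L)^(L+1))⁻¹ := by
        rw [← inv_pow, inv_div]
      rw [h1]
      exact inv_anti₀ (Real.exp_pos 1) (eLeRatio L hL1)
    have step4 : c^(L+1) ≤ c^L := pow_le_pow_of_le_one hcpos.le hclt.le (by omega)
    calc (2*A)^(L+1) / (((L+1).factorial:ℝ)) ≤ (Real.exp 1 * (2*A) / ((L:ℝ)+1))^(L+1) := step1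
      _ = c^(L+1) * ((L:ℝ)/((L:ℝ)+1))^(L+1) := step2
      _ ≤ c^L * (Real.exp 1)⁻¹ := by
          apply mul_le_mul step4 step3 (by positivity) (by positivity)
  have hq3 : (2:ℝ) * q^(L+1) ≤ c^L / 2 := by
    have hcc : c^(L+1) ≤ c^L := pow_le_pow_of_le_one hcpos.le hclt.le (by omega)
    have h4 : (4:ℝ) ≤ 2^(L+1) := by
      calc (4:ℝ) = 2^2 := by norm_num
        _ ≤ 2^(L+1) := pow_le_pow_right₀ (by norm_num) (by omega)
    rw [hq, div_pow, ← mul_div_assoc, div_le_div_iff₀ (by positivity) (by norm_num)]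
    nlinarith [pow_nonneg hcpos.le L, pow_nonneg hcpos.le (L+1), pow_pos (show (0:ℝ) < 2 by norm_num) (L+1)]
  have hEinv : (Real.exp 1)⁻¹ ≤ 1/2 := by
    rw [show (1:ℝ)/2 = (2:ℝ)⁻¹ by norm_num]
    exact inv_anti₀ (by norm_num) hE2
  have hclnn : (0:ℝ) ≤ c^L := by positivity
  -- assemble
  rw [← Summable.sum_add_tsum_nat_add' (k := L+1) ((summable_nat_add_iff (L+1)).mpr hDsum)]
  have hfin1 : (2:ℝ) * (2*A)^(L+1) / (((L+1).factorial:ℝ)) ≤ c^L := by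
    have := mul_le_mul_of_nonneg_left hEinv hclnn
    rw [mul_div_assoc]
    nlinarith [hHB]
  nlinarith [hH, hT, hq3, hfin1]
end
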